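/- For every x ∈ X, the quantity ∫_X q(x′, x) h(x′) μ(dx′) lies in the interval [σ₋ ∫h dμ, σ₊ ∫h dμ] (in particular it is finite and strictly positive), and the probability measure B(x, ·) defined by B(x, A) := (∫_A q(x′, x) h(x′) μ(dx′)) / (∫_X q(x′, x) h(x′) μ(dx′)) satisfies, for every x ∈ X and every measurable A, B(x, A) ≥ (σ₋/σ₊) · (∫_A h dμ)/(∫_X h dμ). (This is the heart of Lemma 9: the transition kernels of the time-reversed hidden chain conditioned on the observations are minorized with the deterministic constant σ₋/σ₊.) -/
import Mathlib


open MeasureTheory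

/-- heart of Lemma 9. For `σ₋ ≤ q ≤ σ₊` and `h ≥ 0` with
`0 < ∫ h dμ < ∞`, the quantity `∫ q(x′,x) h(x′) μ(dx′)` lies in
`[σ₋ ∫h dμ, σ₊ ∫h dμ]`, and the normalized kernel
`B(x,A) = (∫_A q(x′,x) h(x′) μ(dx′)) / (∫_X q(x′,x) h(x′) μ(dx′))` is minorized:
`B(x,A) ≥ (σ₋/σ₊) (∫_A h dμ)/(∫_X h dμ)`. -/
theorem reversed_conditional_kernel_minorization
    {X : Type*} [MeasurableSpace X] (μ : Measure X) [IsProbabilityMeasure μ]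
    (σm σp : ℝ) (hσm : 0 < σm) (hσ : σm ≤ σp)
    (q : X → X → ℝ) (hq : Measurable (Function.uncurry q))
    (hql : ∀ x x', σm ≤ q x' x) (hqu : ∀ x x', q x' x ≤ σp)
    (h : X → ℝ) (hhm : Measurable h) (hh0 : ∀ x, 0 ≤ h x)
    (hhi : Integrable h μ) (hhpos : 0 < ∫ x, h x ∂μ) :
    (∀ x : X,
        σm * ∫ x', h x' ∂μ ≤ ∫ x', q x' x * h x' ∂μ ∧
        ∫ x', q x' x * h x' ∂μ ≤ σp * ∫ x', h x' ∂μ) ∧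
    (∀ x : X, ∀ A : Set X, MeasurableSet A →
        σm / σp * ((∫ x' in A, h x' ∂μ) / ∫ x', h x' ∂μ) ≤
          (∫ x' in A, q x' x * h x' ∂μ) / ∫ x', q x' x * h x' ∂μ) := by
  have hqm : ∀ x : X, Measurable fun x' => q x' x := fun x =>
    hq.comp (measurable_id.prodMk measurable_const)
  have hqi : ∀ x : X, Integrable (fun x' => q x' x * h x') μ := by
    intro x
    refine (hhi.const_mul σp).mono' (((hqm x).mul hhm).aestronglyMeasurable) ?_
    filter_upwards with x'
    rw [Real.norm_eq_abs, abs_of_nonneg (mul_nonneg (hσm.le.trans (hql x x')) (hh0 x'))]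
    exact mul_le_mul_of_nonneg_right (hqu x x') (hh0 x')
  have key : ∀ x : X, ∀ A : Set X,
      σm * ∫ x' in A, h x' ∂μ ≤ ∫ x' in A, q x' x * h x' ∂μ ∧
      ∫ x' in A, q x' x * h x' ∂μ ≤ σp * ∫ x' in A, h x' ∂μ := by
    intro x A
    rw [← integral_const_mul, ← integral_const_mul]
    constructor
    · exact integral_mono (hhi.restrict.const_mul σm) (hqi x).restrict
        (fun x' => mul_le_mul_of_nonneg_right (hql x x') (hh0 x'))
    · exact integral_mono (hqi x).restrict (hhi.restrict.const_mul σp)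
        (fun x' => mul_le_mul_of_nonneg_right (hqu x x') (hh0 x'))
  have key' : ∀ x : X,
      σm * ∫ x', h x' ∂μ ≤ ∫ x', q x' x * h x' ∂μ ∧
      ∫ x', q x' x * h x' ∂μ ≤ σp * ∫ x', h x' ∂μ := by
    intro x
    simpa [Measure.restrict_univ] using key x Set.univ
  refine ⟨key', fun x A hA => ?_⟩
  have hpos : 0 < ∫ x', q x' x * h x' ∂μ :=
    lt_of_lt_of_le (mul_pos hσm hhpos) (key' x).1
  have hAnn : 0 ≤ ∫ x' in A, h x' ∂μ := integral_nonneg fun x' => hh0 x'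
  rw [div_mul_div_comm]
  refine div_le_div₀ (integral_nonneg fun x' =>
      mul_nonneg (hσm.le.trans (hql x x')) (hh0 x')) ?_ hpos (key' x).2
  calc σm * ∫ x' in A, h x' ∂μ ≤ ∫ x' in A, q x' x * h x' ∂μ := (key x A).1
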